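/- Let m ≥ 3 be an odd integer and suppose q = 2^m and a = 2^{(m+1)/2} (the case a = √(2q)). Then limsup_{X→∞} |M(X)|/2^{mX/2} = √2 − 2^{−m/2}. Since √2 − 2^{−m/2} > 1 for m ≥ 3, there exist infinitely many positive integers X (for instance all X ≡ 7 (mod 8)) with |M(X)| > q^{X/2}. -/

import Mathlib

open Real Filter

/-- The coefficient sequence `c_N` with `c_0 = 1`, `c_1 = a - q - 1`,
`c_2 = a*c_1 - q*c_0 + q`, and `c_N = a*c_{N-1} - q*c_{N-2}` for `N ≥ 3`;
these are the Taylor coefficients at `u = 0` of `(1-u)(1-qu)/(1-au+qu²)`,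
the reciprocal of the zeta function of an elliptic curve over `F_q` with
Frobenius trace `a`. -/
def mertC (q a : ℤ) : ℕ → ℤ
  | 0 => 1
  | 1 => a - q - 1
  | 2 => a * (a - q - 1) - q * 1 + q
  | (N + 3) => a * mertC q a (N + 2) - q * mertC q a (N + 1)

/-- `M(X) = ∑_{N=0}^{X-1} c_N`, the Mertens summatory function of the
Möbius function of an elliptic curve over `F_q` with Frobenius trace `a`. -/
def mertM (q a : ℤ) (X : ℕ) : ℤ := ∑ N ∈ Finset.range X, mertC q a N

/-
When `a² = 2q` the characteristic roots `α, ᾱ` of `x² - a x + q` are `√q · e^{±iπ/4}`, so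
`α⁴ = ᾱ⁴ = -q²` and `M(X + 4) = -q² M(X)` for `X ≥ 1`. Hence `|M(X)| / q^{X/2}` is
4-periodic on `X ≥ 1`; its values at `X = 1, 2, 3, 4` are `q^{-1/2}`, `1 - a/q`,
`√2 - q^{-1/2}` and `1`, and the third is the largest once `q ≥ 6`. It is attained at
every `X ≡ 3 (mod 4)`, where it exceeds `1`.
-/

theorem limsup_eq_of_eventually_le_of_frequently_eq {α β : Type*}
    [ConditionallyCompleteLinearOrder β] {f : Filter α} {u : α → β} {b : β}
    (hle : ∀ᶠ x in f, u x ≤ b) (hfreq : ∃ᶠ x in f, u x = b) : limsup u f = b :=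
  have hge : ∃ᶠ x in f, b ≤ u x := hfreq.mono fun _ h => h.ge
  le_antisymm (limsup_le_of_le (IsCoboundedUnder.of_frequently_ge hge) hle)
    (le_limsup_of_frequently_le hge (isBoundedUnder_of_eventually_le hle))

theorem one_lt_sqrt_two_sub_inv_sqrt {q : ℝ} (hq : 6 ≤ q) : 1 < √2 - (√q)⁻¹ := by
  have hs : √q ^ 2 = q := sq_sqrt (by linarith)
  have hs0 : 0 < √q := sqrt_pos.mpr (by linarith)
  have h2 : √2 ^ 2 = 2 := sq_sqrt (by norm_num)
  -- `q (√2 - 1)² ≥ 6 (3 - 2√2) > 1`, since `12 √2 < 17`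
  have h2lt : √2 < 17 / 12 := by nlinarith [sqrt_nonneg 2]
  have hsq : 1 < (√q * (√2 - 1)) ^ 2 := by rw [mul_pow, hs]; nlinarith
  have h1 : 1 < √2 := by rw [lt_sqrt zero_le_one]; norm_num
  have : 1 < √q * (√2 - 1) := by nlinarith [mul_pos hs0 (sub_pos.mpr h1)]
  rw [lt_sub_iff_add_lt, ← lt_sub_iff_add_lt', inv_lt_iff_one_lt_mul₀ hs0]
  linarith

theorem mertM_add_three (q a : ℤ) (X : ℕ) :
    mertM q a (X + 3) = a * mertM q a (X + 2) - q * mertM q a (X + 1) := by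
  induction X with
  | zero =>
    simp only [mertM, zero_add, Finset.sum_range_succ, Finset.sum_range_zero, mertC]
    ring
  | succ n ih =>
    simp only [mertM, Finset.sum_range_succ _ (n + 3), Finset.sum_range_succ _ (n + 2),
      Finset.sum_range_succ _ (n + 1)] at ih ⊢
    rw [show mertC q a (n + 3) = a * mertC q a (n + 2) - q * mertC q a (n + 1) from rfl]
    linear_combination ih

section

variable {q a : ℤ}

theorem mertM_add_five (h : a ^ 2 = 2 * q) (X : ℕ) :
    mertM q a (X + 5) = -q ^ 2 * mertM q a (X + 1) := by
  have r₁ := mertM_add_three q a (X + 2)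
  have r₂ := mertM_add_three q a (X + 1)
  have r₃ := mertM_add_three q a X
  linear_combination r₁ + a * r₂ + (a ^ 2 - q) * r₃ +
    (a * mertM q a (X + 2) - q * mertM q a (X + 1)) * h

theorem mertM_one : mertM q a 1 = 1 := by
  simp [mertM, mertC]

theorem mertM_two : mertM q a 2 = a - q := by
  simp [mertM, Finset.sum_range_succ, mertC]

theorem mertM_three (h : a ^ 2 = 2 * q) : mertM q a 3 = q - a * q := by
  simp only [mertM, Finset.sum_range_succ, Finset.sum_range_zero, mertC]
  linear_combination h

theorem mertM_four (h : a ^ 2 = 2 * q) : mertM q a 4 = -q ^ 2 := by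
  simp only [mertM, Finset.sum_range_succ, Finset.sum_range_zero, mertC]
  linear_combination (a - q) * h

theorem cast_eq_sqrt_two_mul_sqrt (h : a ^ 2 = 2 * q) (ha : 0 < a) :
    (a : ℝ) = √2 * √(q : ℝ) := by
  rw [← sqrt_mul zero_le_two, ← sqrt_sq (show (0 : ℝ) ≤ a by exact_mod_cast ha.le)]
  exact_mod_cast congrArg Real.sqrt (congrArg (Int.cast (R := ℝ)) h)

noncomputable def mertRatio (q a : ℤ) (X : ℕ) : ℝ := |(mertM q a X : ℝ)| / √(q : ℝ) ^ X

theorem mertRatio_add_five (h : a ^ 2 = 2 * q) (hq : 0 < q) (X : ℕ) :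
    mertRatio q a (X + 5) = mertRatio q a (X + 1) := by
  have hs : √(q : ℝ) ^ 2 = q := sq_sqrt (by positivity)
  have hq0 : (q : ℝ) ^ 2 ≠ 0 := by positivity
  rw [mertRatio, mertRatio, mertM_add_five h, show X + 5 = X + 1 + 2 * 2 by ring, pow_add,
    pow_mul, hs]
  push_cast
  rw [abs_mul, abs_neg, abs_of_pos (by positivity : (0 : ℝ) < (q : ℝ) ^ 2), mul_comm (_ ^ (X + 1)),
    mul_div_mul_left _ _ hq0]

theorem mertRatio_four_mul_add_one (h : a ^ 2 = 2 * q) (hq : 0 < q) (k r : ℕ) :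
    mertRatio q a (4 * k + r + 1) = mertRatio q a (r + 1) := by
  induction k with
  | zero => simp
  | succ k ih => rw [show 4 * (k + 1) + r + 1 = 4 * k + r + 5 by ring, mertRatio_add_five h hq, ih]

theorem mertRatio_eq_of_mod_four_eq_three (h : a ^ 2 = 2 * q) (ha : 0 < a) (hq : 0 < q)
    {X : ℕ} (hX : X % 4 = 3) : mertRatio q a X = √2 - (√(q : ℝ))⁻¹ := by
  obtain ⟨k, rfl⟩ : ∃ k, X = 4 * k + 2 + 1 := ⟨X / 4, by omega⟩
  rw [mertRatio_four_mul_add_one h hq, mertRatio, mertM_three h]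
  have hs : √(q : ℝ) ^ 2 = q := sq_sqrt (by positivity)
  have hs0 : 0 < √(q : ℝ) := sqrt_pos.mpr (by positivity)
  have haq : ((q - a * q : ℤ) : ℝ) = -(√(q : ℝ) ^ 2 * (√2 * √(q : ℝ) - 1)) := by
    push_cast; rw [cast_eq_sqrt_two_mul_sqrt h ha, hs]; ring
  have ha1 : (1 : ℝ) ≤ √2 * √(q : ℝ) := by
    rw [← cast_eq_sqrt_two_mul_sqrt h ha]; exact_mod_cast ha
  rw [haq, abs_neg, abs_of_nonneg (by nlinarith)]
  field_simp
  ring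

theorem mertRatio_le (h : a ^ 2 = 2 * q) (ha : 0 < a) (hq : 6 ≤ q) {X : ℕ} (hX : 1 ≤ X) :
    mertRatio q a X ≤ √2 - (√(q : ℝ))⁻¹ := by
  have hq0 : 0 < q := by omega
  have hL := one_lt_sqrt_two_sub_inv_sqrt (q := (q : ℝ)) (by exact_mod_cast hq)
  have hs : √(q : ℝ) ^ 2 = q := sq_sqrt (by positivity)
  have hs1 : 1 ≤ √(q : ℝ) := one_le_sqrt.mpr (by exact_mod_cast (by omega : 1 ≤ q))
  obtain ⟨k, r, hr, rfl⟩ : ∃ k r, r < 4 ∧ X = 4 * k + r + 1 :=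
    ⟨(X - 1) / 4, (X - 1) % 4, by omega, by omega⟩
  rw [mertRatio_four_mul_add_one h hq0]
  interval_cases r
  · rw [mertRatio, mertM_one]
    simp only [Int.cast_one, abs_one, zero_add, pow_one, one_div]
    linarith [inv_le_one_of_one_le₀ hs1]
  · rw [mertRatio, mertM_two, hs, div_le_iff₀ (by positivity)]
    have : |a - q| ≤ q := abs_sub_le_iff.mpr ⟨by nlinarith, by omega⟩
    nlinarith [(by exact_mod_cast this : |((a - q : ℤ) : ℝ)| ≤ q)]
  · exact (mertRatio_eq_of_mod_four_eq_three h ha hq0 rfl).le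
  · rw [mertRatio, mertM_four h, show 3 + 1 = 2 * 2 by rfl, pow_mul, hs]
    push_cast
    rw [abs_neg, abs_of_nonneg (by positivity), div_self (by positivity)]
    exact hL.le

theorem limsup_mertRatio (h : a ^ 2 = 2 * q) (ha : 0 < a) (hq : 6 ≤ q) :
    limsup (mertRatio q a) atTop = √2 - (√(q : ℝ))⁻¹ :=
  limsup_eq_of_eventually_le_of_frequently_eq
    (eventually_atTop.mpr ⟨1, fun _ hX => mertRatio_le h ha hq hX⟩)
    (frequently_atTop.mpr fun N =>
      ⟨4 * N + 3, by omega, mertRatio_eq_of_mod_four_eq_three h ha (by omega) (by omega)⟩)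

theorem sqrt_pow_lt_abs_mertM (h : a ^ 2 = 2 * q) (ha : 0 < a) (hq : 6 ≤ q) {X : ℕ}
    (hX : X % 4 = 3) : √(q : ℝ) ^ X < |(mertM q a X : ℝ)| := by
  have hs0 : 0 < √(q : ℝ) ^ X := by positivity
  have hL := one_lt_sqrt_two_sub_inv_sqrt (q := (q : ℝ)) (by exact_mod_cast hq)
  rw [← mertRatio_eq_of_mod_four_eq_three h ha (by omega) hX, mertRatio] at hL
  exact (one_lt_div hs0).mp hL

end

theorem two_rpow_mul_div_two (m : ℕ) (x : ℝ) : (2 : ℝ) ^ ((m : ℝ) * x / 2) = √(2 ^ m) ^ x := by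
  rw [← rpow_div_two_eq_sqrt _ (by positivity), ← rpow_natCast, ← rpow_mul zero_le_two,
    mul_div_assoc]

theorem mertens_limsup_sqrt_2q (m : ℕ) (hm : 3 ≤ m) (hodd : Odd m) (q a : ℤ)
    (hq : q = 2 ^ m) (ha : a = 2 ^ ((m + 1) / 2)) :
    Filter.limsup (fun X : ℕ => |(mertM q a X : ℝ)| / (2 : ℝ) ^ ((m : ℝ) * (X : ℝ) / 2))
        Filter.atTop = Real.sqrt 2 - (2 : ℝ) ^ (-(m : ℝ) / 2) ∧
    Real.sqrt 2 - (2 : ℝ) ^ (-(m : ℝ) / 2) > 1 ∧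
    ∀ X : ℕ, 1 ≤ X → X % 8 = 7 →
      |(mertM q a X : ℝ)| > (q : ℝ) ^ ((X : ℝ) / 2) := by
  have h2q : a ^ 2 = 2 * q := by
    obtain ⟨j, rfl⟩ := hodd
    rw [hq, ha, ← pow_mul, ← pow_succ']
    congr 1
    omega
  have ha0 : 0 < a := ha ▸ by positivity
  have hq6 : 6 ≤ q := hq ▸ le_trans (by norm_num) (pow_le_pow_right₀ one_le_two hm)
  have hqR : (q : ℝ) = 2 ^ m := by rw [hq]; push_cast; rfl
  have hinv : (2 : ℝ) ^ (-(m : ℝ) / 2) = (√(q : ℝ))⁻¹ := by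
    rw [neg_div, rpow_neg zero_le_two, ← mul_one (m : ℝ), two_rpow_mul_div_two, rpow_one, hqR]
  have hratio : (fun X : ℕ => |(mertM q a X : ℝ)| / (2 : ℝ) ^ ((m : ℝ) * (X : ℝ) / 2)) =
      mertRatio q a := by
    funext X; rw [two_rpow_mul_div_two, rpow_natCast, ← hqR, mertRatio]
  refine ⟨by rw [hratio, hinv, limsup_mertRatio h2q ha0 hq6], ?_, fun X _ hX => ?_⟩
  · exact hinv ▸ one_lt_sqrt_two_sub_inv_sqrt (by exact_mod_cast hq6)
  · rw [rpow_div_two_eq_sqrt _ (by positivity), rpow_natCast]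
    exact sqrt_pow_lt_abs_mertM h2q ha0 hq6 (by omega)
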